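/- If two permutations π and ρ are sorted by s_T with the same movement sequence and s_T(π) = s_T(ρ), then π = ρ. -/

import Mathlib

open List

attribute [local instance] Classical.propDecidable

/-- `u` is order-isomorphic to `v`. -/
def OrdIso (u v : List ℕ) : Prop :=
  u.length = v.length ∧
    ∀ i j, i < u.length → j < u.length →
      (u.getD i 0 < u.getD j 0 ↔ v.getD i 0 < v.getD j 0)

/-- The word `w` contains the pattern `p`. -/
def Contains (w p : List ℕ) : Prop :=
  ∃ u, u.Sublist w ∧ OrdIso u p

/-- The word `w` avoids every pattern in `T`. -/
def AvoidsSet (T : Set (List ℕ)) (w : List ℕ) : Prop :=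
  ∀ p ∈ T, ¬ Contains w p

/-- One step of the `T`-avoiding stack machine: state is (input, stack, output);
the stack is read top to bottom (head is the top). -/
noncomputable def sTaux (T : Set (List ℕ)) : List ℕ → List ℕ → List ℕ → List ℕ
  | [], stack, out => out ++ stack
  | x :: rest, stack, out =>
    if AvoidsSet T (x :: stack) then sTaux T rest (x :: stack) out
    else
      match stack with
      | [] => sTaux T rest [x] out
      | y :: s => sTaux T (x :: rest) s (out ++ [y])
termination_by input stack _ => 2 * input.length + stack.length
decreasing_by all_goals first | (simp_wf; omega) | omega | simp_wf

/-- The stack-sorting map `s_T`. -/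
noncomputable def sT (T : Set (List ℕ)) (w : List ℕ) : List ℕ := sTaux T w [] []

/-- `w` is a permutation of `{1, …, w.length}`. -/
def IsPermList (w : List ℕ) : Prop := w.Perm (List.range' 1 w.length)

/-- `T` is reduced: no element of `T` contains another element of `T`. -/
def Reduced (T : Set (List ℕ)) : Prop :=
  ∀ σ ∈ T, ∀ τ ∈ T, σ ≠ τ → ¬ Contains σ τ

/-- `σ̂`: swap the first two entries of `σ`. -/
def hat : List ℕ → List ℕ
  | a :: b :: t => b :: a :: t
  | l => l

/-- A move of the stack machine: push (`N`) or pop (`X`). -/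
inductive SortMove | push | pop
deriving DecidableEq

/-- The movement sequence of the `T`-avoiding stack machine. -/
noncomputable def movesAux (T : Set (List ℕ)) : List ℕ → List ℕ → List SortMove
  | [], stack => List.replicate stack.length SortMove.pop
  | x :: rest, stack =>
    if AvoidsSet T (x :: stack) then SortMove.push :: movesAux T rest (x :: stack)
    else
      match stack with
      | [] => SortMove.push :: movesAux T rest [x]
      | _ :: s => SortMove.pop :: movesAux T (x :: rest) s
termination_by input stack => 2 * input.length + stack.length
decreasing_by all_goals first | (simp_wf; omega) | omega | simp_wf

/-- The movement sequence of `w` under `s_T`. -/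
noncomputable def moves (T : Set (List ℕ)) (w : List ℕ) : List SortMove := movesAux T w []

/-!
Running `s_T` on a word is the same as replaying its movement sequence blindly: a push moves
the next input letter onto the stack, a pop moves the top of the stack to the output, and
neither depends on the letters themselves. Replaying a fixed legal movement sequence is
therefore injective in the input, since each step can be undone by reading the output
backwards.
-/

namespace SortMove

variable {α : Type*}

def replay : List SortMove → List α → List α → List α
  | [], _, _ => []
  | push :: m, x :: inp, st => replay m inp (x :: st)
  | push :: m, [], st => replay m [] st
  | pop :: m, inp, y :: st => y :: replay m inp st
  | pop :: m, inp, [] => replay m inp []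

def Admissible : List SortMove → ℕ → ℕ → Prop
  | [], i, s => i = 0 ∧ s = 0
  | push :: m, i, s => 0 < i ∧ Admissible m (i - 1) (s + 1)
  | pop :: m, i, s => 0 < s ∧ Admissible m i (s - 1)

theorem replay_replicate_pop (inp st : List α) :
    replay (List.replicate st.length pop) inp st = st := by
  induction st with
  | nil => rfl
  | cons a s ih => simp [replay, ih, List.replicate_succ]

theorem admissible_replicate_pop (s : ℕ) : Admissible (List.replicate s pop) 0 s := by
  induction s with
  | zero => exact ⟨rfl, rfl⟩
  | succ s ih => exact ⟨s.succ_pos, ih⟩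

theorem eq_of_replay_eq {m : List SortMove} {π ρ st st' : List α}
    (h : Admissible m π.length st.length) (h' : Admissible m ρ.length st'.length)
    (he : replay m π st = replay m ρ st') : π = ρ ∧ st = st' := by
  induction m generalizing π ρ st st' with
  | nil =>
    simp only [Admissible, List.length_eq_zero_iff] at h h'
    rw [h.1, h.2, h'.1, h'.2]
    exact ⟨rfl, rfl⟩
  | cons a m ih =>
    cases a with
    | push =>
      obtain ⟨x, p, rfl⟩ := List.exists_cons_of_length_pos h.1
      obtain ⟨y, q, rfl⟩ := List.exists_cons_of_length_pos h'.1
      obtain ⟨hpq, hxy⟩ := ih (π := p) (st := x :: st) (by simpa using h.2)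
        (by simpa using h'.2) he
      obtain ⟨rfl, rfl⟩ := List.cons_eq_cons.mp hxy
      exact ⟨congrArg _ hpq, rfl⟩
    | pop =>
      obtain ⟨y, s, rfl⟩ := List.exists_cons_of_length_pos h.1
      obtain ⟨z, s', rfl⟩ := List.exists_cons_of_length_pos h'.1
      simp only [replay, List.cons.injEq] at he
      obtain ⟨rfl, he⟩ := he
      obtain ⟨rfl, rfl⟩ := ih (by simpa using h.2) (by simpa using h'.2) he
      exact ⟨rfl, rfl⟩

end SortMove

open SortMove

theorem sTaux_eq_append_replay (T : Set (List ℕ)) (π st out : List ℕ) :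
    sTaux T π st out = out ++ replay (movesAux T π st) π st := by
  induction π, st using movesAux.induct T generalizing out with
  | case1 st =>
    rw [sTaux.eq_def, movesAux.eq_def]
    simp [replay_replicate_pop]
  | case2 x rest st h ih =>
    rw [sTaux.eq_def, movesAux.eq_def]
    simp only [if_pos h, ih, replay]
  | case3 x rest h ih =>
    rw [sTaux.eq_def, movesAux.eq_def]
    simp only [if_neg h, ih, replay]
  | case4 x rest y s h ih =>
    rw [sTaux.eq_def, movesAux.eq_def]
    simp [if_neg h, ih, replay]

theorem sT_eq_replay_moves (T : Set (List ℕ)) (π : List ℕ) :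
    sT T π = replay (moves T π) π [] :=
  sTaux_eq_append_replay T π [] []

theorem admissible_movesAux (T : Set (List ℕ)) (π st : List ℕ) :
    Admissible (movesAux T π st) π.length st.length := by
  induction π, st using movesAux.induct T with
  | case1 st =>
    rw [movesAux.eq_def]
    exact admissible_replicate_pop _
  | case2 x rest st h ih =>
    rw [movesAux.eq_def]
    simp only [if_pos h]
    exact ⟨Nat.succ_pos _, by simpa using ih⟩
  | case3 x rest h ih =>
    rw [movesAux.eq_def]
    simp only [if_neg h]
    exact ⟨Nat.succ_pos _, by simpa using ih⟩
  | case4 x rest y s h ih =>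
    rw [movesAux.eq_def]
    simp only [if_neg h]
    exact ⟨Nat.succ_pos _, by simpa using ih⟩

theorem stmt8_general (T : Set (List ℕ)) (π ρ : List ℕ) (hm : moves T π = moves T ρ)
    (hs : sT T π = sT T ρ) :
    π = ρ := by
  have hπ : Admissible (moves T ρ) π.length 0 := hm ▸ admissible_movesAux T π []
  rw [sT_eq_replay_moves, sT_eq_replay_moves, hm] at hs
  exact (eq_of_replay_eq hπ (admissible_movesAux T ρ []) hs).1

/-- Two permutations with the same movement sequence and the same image under `s_T`
are equal. -/
theorem stmt8 (T : Set (List ℕ)) (π ρ : List ℕ) (hπ : IsPermList π)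
    (hρ : IsPermList ρ) (hm : moves T π = moves T ρ) (hs : sT T π = sT T ρ) :
    π = ρ :=
  stmt8_general T π ρ hm hs
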